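/- Let μ₁ ≥ ν₁ > 0 and μ₂ ≥ ν₂ > 0, and let S^{μ,ν}(t) be the anisotropic heat semigroup on Ḣ^s(𝕋³) given by the Fourier symbol e^{-(μ(k₁²+k₂²)+νk₃²)t}. Then for any φ ∈ [0,2], t ≥ 0 and q ∈ Ḣ^s(𝕋³): ‖(S^{μ₁,ν₁}(t) − S^{μ₂,ν₂}(t))q‖_{Ḣ^{s−φ}} ≤ C (|μ₁−μ₂| + |ν₁−ν₂|)^{φ/2} t^{φ/2} ‖q‖_{Ḣ^s}, with C uniform in φ ∈ [0,2]. -/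

import Mathlib

/-!
The difference of the two Fourier multipliers is `e^{-a t} - e^{-b t}` with `a, b ≥ 0` the two
symbols. It is bounded both by `1` and by `|a - b| t`, hence by `(|a - b| t)^{φ/2}` for
`φ ∈ [0, 2]`; and `|a - b| ≤ (|μ₁ - μ₂| + |ν₁ - ν₂|) |k|²`. The resulting factor `|k|^φ` is
absorbed by the loss of `φ` derivatives, so the estimate holds with `C = 1`.
-/

open scoped BigOperators Classical

/-- Euclidean norm of an integer lattice point in `ℤ³`. -/
noncomputable def nrm3 (k : Fin 3 → ℤ) : ℝ :=
  Real.sqrt (((k 0 : ℝ)) ^ 2 + ((k 1 : ℝ)) ^ 2 + ((k 2 : ℝ)) ^ 2)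

/-- The squared `Ḣ^s(𝕋³)` norm of a function given through its Fourier coefficients. -/
noncomputable def hnormSq (s : ℝ) (q : (Fin 3 → ℤ) → ℂ) : ℝ :=
  ∑' k : Fin 3 → ℤ, nrm3 k ^ (2 * s) * ‖q k‖ ^ 2

/-- The anisotropic heat semigroup `S^{μ,ν}(t)`, acting on Fourier coefficients by
multiplication with `exp(-(μ(k₁²+k₂²)+ν k₃²) t)`. -/
noncomputable def sg (μ ν t : ℝ) (q : (Fin 3 → ℤ) → ℂ) : (Fin 3 → ℤ) → ℂ := fun k =>
  (Real.exp (-(μ * (((k 0 : ℝ)) ^ 2 + ((k 1 : ℝ)) ^ 2) + ν * ((k 2 : ℝ)) ^ 2) * t) : ℝ) * q k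

open Real

lemma min_one_le_rpow {x θ : ℝ} (hx : 0 ≤ x) (hθ₀ : 0 ≤ θ) (hθ₁ : θ ≤ 1) :
    min 1 x ≤ x ^ θ := by
  rcases le_or_gt x 1 with hx₁ | hx₁
  · rw [min_eq_right hx₁]
    rcases hx.eq_or_lt with rfl | hx₀
    · exact rpow_nonneg le_rfl θ
    · simpa using rpow_le_rpow_of_exponent_ge hx₀ hx₁ hθ₁
  · exact (min_le_left _ _).trans (one_le_rpow hx₁.le hθ₀)

lemma abs_exp_neg_sub_exp_neg_le {x y : ℝ} (hx : 0 ≤ x) (hy : 0 ≤ y) :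
    |exp (-x) - exp (-y)| ≤ min 1 |x - y| := by
  wlog hxy : x ≤ y generalizing x y
  · rw [abs_sub_comm, abs_sub_comm x]
    exact this hy hx (le_of_not_ge hxy)
  have hyx : exp (-y) ≤ exp (-x) := exp_le_exp.2 (by linarith)
  have hx₁ : exp (-x) ≤ 1 := exp_le_one_iff.2 (by linarith)
  have hy₀ : 0 < exp (-y) := exp_pos _
  have hfactor : exp (-y) = exp (-x) * exp (x - y) := by rw [← exp_add]; ring_nf
  have hlin : 1 - exp (x - y) ≤ y - x := by linarith [add_one_le_exp (x - y)]
  have hxy₁ : exp (x - y) ≤ 1 := exp_le_one_iff.2 (by linarith)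
  rw [abs_of_nonneg (by linarith), abs_of_nonpos (by linarith)]
  refine le_min (by linarith) ?_
  nlinarith [exp_pos (-x)]

lemma abs_exp_neg_sub_exp_neg_le_rpow {x y θ : ℝ} (hx : 0 ≤ x) (hy : 0 ≤ y)
    (hθ₀ : 0 ≤ θ) (hθ₁ : θ ≤ 1) : |exp (-x) - exp (-y)| ≤ |x - y| ^ θ :=
  (abs_exp_neg_sub_exp_neg_le hx hy).trans (min_one_le_rpow (abs_nonneg _) hθ₀ hθ₁)

lemma nrm3_nonneg (k : Fin 3 → ℤ) : 0 ≤ nrm3 k := sqrt_nonneg _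

lemma nrm3_sq (k : Fin 3 → ℤ) :
    nrm3 k ^ 2 = (k 0 : ℝ) ^ 2 + (k 1 : ℝ) ^ 2 + (k 2 : ℝ) ^ 2 := by
  rw [nrm3, sq_sqrt (by positivity)]

lemma nrm3_pos {k : Fin 3 → ℤ} (hk : k ≠ 0) : 0 < nrm3 k := by
  refine sqrt_pos.2 (lt_of_le_of_ne (by positivity) fun h => hk ?_)
  obtain ⟨h₀, h₁, h₂⟩ : (k 0 : ℝ) = 0 ∧ (k 1 : ℝ) = 0 ∧ (k 2 : ℝ) = 0 := by
    refine ⟨?_, ?_, ?_⟩ <;>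
      nlinarith [sq_nonneg (k 0 : ℝ), sq_nonneg (k 1 : ℝ), sq_nonneg (k 2 : ℝ)]
  ext i
  fin_cases i <;> simp_all

noncomputable def anisoSymbol (μ ν : ℝ) (k : Fin 3 → ℤ) : ℝ :=
  μ * ((k 0 : ℝ) ^ 2 + (k 1 : ℝ) ^ 2) + ν * (k 2 : ℝ) ^ 2

lemma anisoSymbol_nonneg {μ ν : ℝ} (hμ : 0 ≤ μ) (hν : 0 ≤ ν) (k : Fin 3 → ℤ) :
    0 ≤ anisoSymbol μ ν k := by
  unfold anisoSymbol; positivity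

lemma abs_anisoSymbol_sub_le (μ₁ ν₁ μ₂ ν₂ : ℝ) (k : Fin 3 → ℤ) :
    |anisoSymbol μ₁ ν₁ k - anisoSymbol μ₂ ν₂ k| ≤ (|μ₁ - μ₂| + |ν₁ - ν₂|) * nrm3 k ^ 2 := by
  have hsplit : anisoSymbol μ₁ ν₁ k - anisoSymbol μ₂ ν₂ k =
      (μ₁ - μ₂) * ((k 0 : ℝ) ^ 2 + (k 1 : ℝ) ^ 2) + (ν₁ - ν₂) * (k 2 : ℝ) ^ 2 := by
    unfold anisoSymbol; ring
  rw [hsplit, nrm3_sq]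
  calc _ ≤ |μ₁ - μ₂| * ((k 0 : ℝ) ^ 2 + (k 1 : ℝ) ^ 2) + |ν₁ - ν₂| * (k 2 : ℝ) ^ 2 := by
        refine (abs_add_le _ _).trans ?_
        rw [abs_mul, abs_mul, abs_of_nonneg (a := (k 0 : ℝ) ^ 2 + (k 1 : ℝ) ^ 2) (by positivity),
          abs_of_nonneg (sq_nonneg (k 2 : ℝ))]
    _ ≤ _ := by
        nlinarith [abs_nonneg (μ₁ - μ₂), abs_nonneg (ν₁ - ν₂), sq_nonneg (k 0 : ℝ),
          sq_nonneg (k 1 : ℝ), sq_nonneg (k 2 : ℝ)]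

lemma sg_sub_sg_apply (μ₁ ν₁ μ₂ ν₂ t : ℝ) (q : (Fin 3 → ℤ) → ℂ) (k : Fin 3 → ℤ) :
    sg μ₁ ν₁ t q k - sg μ₂ ν₂ t q k =
      ((exp (-(anisoSymbol μ₁ ν₁ k * t)) - exp (-(anisoSymbol μ₂ ν₂ k * t)) : ℝ) : ℂ) * q k := by
  simp only [sg, anisoSymbol, neg_mul, Complex.ofReal_sub]
  ring

lemma norm_sg_sub_sg_le {μ₁ ν₁ μ₂ ν₂ t φ : ℝ} (hμ₁ : 0 ≤ μ₁) (hν₁ : 0 ≤ ν₁) (hμ₂ : 0 ≤ μ₂)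
    (hν₂ : 0 ≤ ν₂) (ht : 0 ≤ t) (hφ₀ : 0 ≤ φ) (hφ₂ : φ ≤ 2) (q : (Fin 3 → ℤ) → ℂ)
    (k : Fin 3 → ℤ) :
    ‖sg μ₁ ν₁ t q k - sg μ₂ ν₂ t q k‖ ≤
      ((|μ₁ - μ₂| + |ν₁ - ν₂|) * t) ^ (φ / 2) * nrm3 k ^ φ * ‖q k‖ := by
  set δ := |μ₁ - μ₂| + |ν₁ - ν₂|
  set a := anisoSymbol μ₁ ν₁ k
  set b := anisoSymbol μ₂ ν₂ k
  have ha : 0 ≤ a * t := mul_nonneg (anisoSymbol_nonneg hμ₁ hν₁ k) ht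
  have hb : 0 ≤ b * t := mul_nonneg (anisoSymbol_nonneg hμ₂ hν₂ k) ht
  have hmult : |exp (-(a * t)) - exp (-(b * t))| ≤ (δ * t) ^ (φ / 2) * nrm3 k ^ φ :=
    calc _ ≤ |a * t - b * t| ^ (φ / 2) :=
          abs_exp_neg_sub_exp_neg_le_rpow ha hb (by linarith) (by linarith)
      _ ≤ (δ * nrm3 k ^ 2 * t) ^ (φ / 2) := by
          rw [← sub_mul, abs_mul, abs_of_nonneg ht]
          gcongr
          exact abs_anisoSymbol_sub_le μ₁ ν₁ μ₂ ν₂ k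
      _ = (δ * t) ^ (φ / 2) * nrm3 k ^ φ := by
          rw [mul_right_comm, mul_rpow (by positivity) (by positivity), ← rpow_natCast,
            ← rpow_mul (nrm3_nonneg k)]
          congr 2
          push_cast
          ring
  rw [sg_sub_sg_apply, norm_mul, Complex.norm_real, norm_eq_abs]
  exact mul_le_mul_of_nonneg_right hmult (norm_nonneg _)

lemma sqrt_hnormSq_sub_le_of_norm_le_mul_rpow {s φ c : ℝ} {p q : (Fin 3 → ℤ) → ℂ} (hc : 0 ≤ c)
    (hp₀ : p 0 = 0) (hpq : ∀ k, ‖p k‖ ≤ c * nrm3 k ^ φ * ‖q k‖)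
    (hq : Summable fun k => nrm3 k ^ (2 * s) * ‖q k‖ ^ 2) :
    sqrt (hnormSq (s - φ) p) ≤ c * sqrt (hnormSq s q) := by
  have hterm : ∀ k, nrm3 k ^ (2 * (s - φ)) * ‖p k‖ ^ 2 ≤
      c ^ 2 * (nrm3 k ^ (2 * s) * ‖q k‖ ^ 2) := by
    intro k
    rcases eq_or_ne k 0 with rfl | hk
    · simpa [hp₀] using mul_nonneg (sq_nonneg c)
        (mul_nonneg (rpow_nonneg (nrm3_nonneg 0) (2 * s)) (sq_nonneg ‖q 0‖))
    have hn := nrm3_pos hk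
    have hweight : nrm3 k ^ (2 * (s - φ)) * (nrm3 k ^ φ) ^ 2 = nrm3 k ^ (2 * s) := by
      rw [← rpow_natCast, ← rpow_mul hn.le, ← rpow_add hn]
      ring_nf
    calc _ ≤ nrm3 k ^ (2 * (s - φ)) * (c * nrm3 k ^ φ * ‖q k‖) ^ 2 := by
          gcongr
          exact hpq k
      _ = _ := by rw [← hweight]; ring
  have hle : hnormSq (s - φ) p ≤ c ^ 2 * hnormSq s q := by
    rw [hnormSq, hnormSq, ← tsum_mul_left]
    refine Summable.tsum_le_tsum hterm ?_ (hq.mul_left _)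
    exact (hq.mul_left _).of_nonneg_of_le
      (fun k => mul_nonneg (rpow_nonneg (nrm3_nonneg k) _) (by positivity)) hterm
  calc _ ≤ sqrt (c ^ 2 * hnormSq s q) := sqrt_le_sqrt hle
    _ = c * sqrt (hnormSq s q) := by rw [sqrt_mul (sq_nonneg c), sqrt_sq hc]

/-- Closedness of the anisotropic semigroups: for `μ₁ ≥ ν₁ > 0`, `μ₂ ≥ ν₂ > 0`,
`φ ∈ [0,2]` and `t ≥ 0`,
`‖(S^{μ₁,ν₁}(t) - S^{μ₂,ν₂}(t)) q‖_{Ḣ^{s-φ}} ≤ C (|μ₁-μ₂|+|ν₁-ν₂|)^{φ/2} t^{φ/2} ‖q‖_{Ḣ^s}`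
with `C` uniform in `φ ∈ [0,2]`. -/
theorem semigroup_difference :
    ∃ C > 0, ∀ φ : ℝ, 0 ≤ φ → φ ≤ 2 →
      ∀ μ₁ ν₁ μ₂ ν₂ s t : ℝ, ν₁ ≤ μ₁ → 0 < ν₁ → ν₂ ≤ μ₂ → 0 < ν₂ → 0 ≤ t →
        ∀ q : (Fin 3 → ℤ) → ℂ, q 0 = 0 →
          Summable (fun k : Fin 3 → ℤ => nrm3 k ^ (2 * s) * ‖q k‖ ^ 2) →
          Real.sqrt (hnormSq (s - φ) (fun k => sg μ₁ ν₁ t q k - sg μ₂ ν₂ t q k))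
            ≤ C * (|μ₁ - μ₂| + |ν₁ - ν₂|) ^ (φ / 2) * t ^ (φ / 2) * Real.sqrt (hnormSq s q) := by
  refine ⟨1, one_pos, fun φ hφ₀ hφ₂ μ₁ ν₁ μ₂ ν₂ s t hνμ₁ hν₁ hνμ₂ hν₂ ht q hq₀ hq => ?_⟩
  have hδ : 0 ≤ |μ₁ - μ₂| + |ν₁ - ν₂| := by positivity
  rw [one_mul, ← mul_rpow hδ ht]
  exact sqrt_hnormSq_sub_le_of_norm_le_mul_rpow (by positivity) (by simp [sg, hq₀])
    (norm_sg_sub_sg_le (by linarith) hν₁.le (by linarith) hν₂.le ht hφ₀ hφ₂ q) hq
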